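/- Let N ≥ 1, let S ⊆ ℝ^N be compact, let h ∈ B_S, let D_1, …, D_M ⊆ ℝ^N be measurable sets, and let ω_1, …, ω_M ∈ (0,1] with ω_1 + ⋯ + ω_M = 1. Let μ > 0 and 0 < τ < 2/(1 + 2μ). Define \hat{T}_h f = Σ_{m=1}^M ω_m P_S((1 − μτ) f + τ χ_{D_m}(h − f)). If \hat{f}* ∈ B_S satisfies \hat{T}_h \hat{f}* = \hat{f}*, then \hat{f}* is the unique minimizer over f ∈ B_S of the Tikhonov functional γ(f) = Σ_{m=1}^M ω_m ‖χ_{D_m} f − h‖² + μ‖f‖². -/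

import Mathlib

open MeasureTheory FourierTransform Filter

noncomputable section

/-- The Hilbert space `L²(ℝᴺ; ℂ)` of square-integrable functions on `ℝᴺ`. -/
abbrev L2Space (N : ℕ) : Type :=
  Lp ℂ 2 (volume : Measure (EuclideanSpace ℝ (Fin N)))

/-- `f ∈ L²(ℝᴺ)` is bandlimited to `S`: its Fourier transform vanishes (a.e.) outside `S`;
equivalently, `f` agrees a.e. with the inverse Fourier transform of an integrable function `F`
vanishing outside `S`. -/
def IsBandlimited {N : ℕ} (S : Set (EuclideanSpace ℝ (Fin N))) (f : L2Space N) : Prop :=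
  ∃ F : EuclideanSpace ℝ (Fin N) → ℂ,
    Integrable F ∧ (∀ k, k ∉ S → F k = 0) ∧
      (f : EuclideanSpace ℝ (Fin N) → ℂ) =ᵐ[volume] 𝓕⁻ F

/-- Multiplication of `f ∈ L²` by the indicator function `χ_D`, as an element of `L²`. -/
def chiMul {N : ℕ} {D : Set (EuclideanSpace ℝ (Fin N))} (hD : MeasurableSet D)
    (f : L2Space N) : L2Space N :=
  ((Lp.memLp f).indicator hD).toLp (D.indicator f)

/-- The orthogonal projection of `L²(ℝᴺ)` onto a closed subspace `K`. -/
def projOf {N : ℕ} (K : Submodule ℂ (L2Space N)) (hK : IsClosed (K : Set (L2Space N))) :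
    L2Space N → L2Space N :=
  haveI : CompleteSpace K := hK.completeSpace_coe
  fun f => (K.orthogonalProjection f : L2Space N)

/-- The operator `T_h^{(D)} f = P_S (f + χ_D (h − f))` (single region). -/
def Tsingle {N : ℕ} (K : Submodule ℂ (L2Space N)) (hK : IsClosed (K : Set (L2Space N)))
    {D : Set (EuclideanSpace ℝ (Fin N))} (hD : MeasurableSet D)
    (h f : L2Space N) : L2Space N :=
  projOf K hK (f + chiMul hD (h - f))

/-- The regularized operator `T̂_h f = ∑ m, ω m • P_S ((1 − μτ) f + τ χ_{D m} (h − f))`. -/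
def TmultiReg {N : ℕ} (K : Submodule ℂ (L2Space N)) (hK : IsClosed (K : Set (L2Space N)))
    {M : ℕ} {D : Fin M → Set (EuclideanSpace ℝ (Fin N))} (hD : ∀ m, MeasurableSet (D m))
    (ω : Fin M → ℝ) (μ τ : ℝ) (h f : L2Space N) : L2Space N :=
  ∑ m, ω m • projOf K hK ((1 - μ * τ) • f + τ • chiMul (hD m) (h - f))

/-! The Tikhonov functional `γ` is quadratic:
`γ(f* + g) = γ(f*) + 2 Dγ(f*) g + ∑ ω_m ‖χ_{D_m} g‖² + μ ‖g‖²`.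
Since `∑ ω_m = 1` and `τ ≠ 0`, the fixed-point equation for `f* ∈ B_S` is equivalent to
`P_S (∑ ω_m χ_{D_m} (h − f*)) = μ f*`, and because each `χ_{D_m}` is an orthogonal projection
this says that `Dγ(f*)` vanishes on `B_S`. Hence `γ(f) − γ(f*) > 0` for `f ≠ f*` in `B_S`. -/

open scoped InnerProductSpace

section Tikhonov

variable {𝕜 E F ι : Type*} [RCLike 𝕜] [NormedAddCommGroup E] [InnerProductSpace 𝕜 E]
  [NormedAddCommGroup F] [InnerProductSpace 𝕜 F] [Fintype ι]

def tikhonov (A : ι → E →ₗ[𝕜] F) (ω : ι → ℝ) (μ : ℝ) (h : F) (f : E) : ℝ :=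
  ∑ m, ω m * ‖A m f - h‖ ^ 2 + μ * ‖f‖ ^ 2

variable (A : ι → E →ₗ[𝕜] F) (ω : ι → ℝ) (μ : ℝ) (h : F)

theorem tikhonov_add (f g : E) :
    tikhonov A ω μ h (f + g) = tikhonov A ω μ h f +
      2 * (∑ m, ω m * RCLike.re ⟪A m f - h, A m g⟫_𝕜 + μ * RCLike.re ⟪f, g⟫_𝕜) +
      tikhonov A ω μ 0 g := by
  have hA : ∀ m, A m (f + g) - h = (A m f - h) + A m g := fun m => by
    rw [map_add]; abel
  simp only [tikhonov, hA, sub_zero, norm_add_sq (𝕜 := 𝕜), mul_add, Finset.sum_add_distrib,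
    Finset.mul_sum]
  ring_nf

variable {A ω μ h}

theorem tikhonov_zero_pos (hω : ∀ m, 0 ≤ ω m) (hμ : 0 < μ) {g : E} (hg : g ≠ 0) :
    0 < tikhonov A ω μ 0 g :=
  add_pos_of_nonneg_of_pos (Finset.sum_nonneg fun m _ => mul_nonneg (hω m) (sq_nonneg _))
    (mul_pos hμ (pow_pos (norm_pos_iff.mpr hg) 2))

theorem tikhonov_lt_of_critical {K : Submodule 𝕜 E} (hω : ∀ m, 0 ≤ ω m) (hμ : 0 < μ)
    {f₀ : E} (hf₀ : f₀ ∈ K)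
    (hcrit : ∀ g ∈ K,
      ∑ m, ω m * RCLike.re ⟪A m f₀ - h, A m g⟫_𝕜 + μ * RCLike.re ⟪f₀, g⟫_𝕜 = 0)
    {f : E} (hf : f ∈ K) (hne : f ≠ f₀) :
    tikhonov A ω μ h f₀ < tikhonov A ω μ h f := by
  have hsplit := tikhonov_add A ω μ h f₀ (f - f₀)
  rw [add_sub_cancel, hcrit _ (K.sub_mem hf hf₀), mul_zero, add_zero] at hsplit
  rw [hsplit]
  exact lt_add_of_pos_right _ (tikhonov_zero_pos hω hμ (sub_ne_zero.mpr hne))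

end Tikhonov

theorem LinearMap.IsSymmetric.inner_map_sub_map {𝕜 E : Type*} [RCLike 𝕜]
    [NormedAddCommGroup E] [InnerProductSpace 𝕜 E] {A : E →ₗ[𝕜] E} (hA : A.IsSymmetric)
    (hAA : IsIdempotentElem A) (f h g : E) : ⟪A f - h, A g⟫_𝕜 = ⟪A (f - h), g⟫_𝕜 := by
  rw [← hA, map_sub, ← Module.End.mul_apply, hAA.eq, ← map_sub]

theorem tikhonov_critical_of_starProjection_eq {𝕜 E ι : Type*} [RCLike 𝕜]
    [NormedAddCommGroup E] [InnerProductSpace 𝕜 E] [Module ℝ E] [IsScalarTower ℝ 𝕜 E]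
    [Fintype ι] {A : ι → E →ₗ[𝕜] E} (hA : ∀ m, (A m).IsSymmetric)
    (hAA : ∀ m, IsIdempotentElem (A m)) {ω : ι → ℝ} {μ : ℝ} {h f₀ : E}
    (K : Submodule 𝕜 E) [K.HasOrthogonalProjection]
    (hP : K.starProjection (∑ m, ω m • A m (h - f₀)) = μ • f₀) {g : E} (hg : g ∈ K) :
    ∑ m, ω m * RCLike.re ⟪A m f₀ - h, A m g⟫_𝕜 + μ * RCLike.re ⟪f₀, g⟫_𝕜 = 0 := by
  have hproj : ⟪∑ m, ω m • A m (h - f₀), g⟫_𝕜 = ⟪μ • f₀, g⟫_𝕜 := by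
    rw [← hP, K.inner_starProjection_left_eq_right, K.starProjection_eq_self_iff.mpr hg]
  have hre := congrArg RCLike.re hproj
  simp only [sum_inner, RCLike.real_smul_eq_coe_smul (K := 𝕜), inner_smul_real_left,
    map_sum, smul_eq_mul, RCLike.re_ofReal_mul] at hre
  simp only [(hA _).inner_map_sub_map (hAA _), ← neg_sub h f₀, map_neg, inner_neg_left,
    mul_neg, Finset.sum_neg_distrib, hre, neg_add_cancel]

theorem map_sum_smul_eq_smul_of_fixed {R E ι : Type*} [Field R] [AddCommGroup E]
    [Module R E] [Fintype ι] (P : E →ₗ[R] E) {f₀ : E} (hP : P f₀ = f₀) {ω : ι → R}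
    (hω : ∑ m, ω m = 1) {μ τ : R} (hτ : τ ≠ 0) (r : ι → E)
    (hfix : ∑ m, ω m • P ((1 - μ * τ) • f₀ + τ • r m) = f₀) :
    P (∑ m, ω m • r m) = μ • f₀ := by
  simp only [map_add, map_smul, hP, smul_add, Finset.sum_add_distrib, ← Finset.sum_smul, hω,
    one_smul, smul_comm (ω _) τ, ← Finset.smul_sum] at hfix
  apply smul_right_injective E hτ
  simp only [map_sum, map_smul]
  rw [eq_sub_iff_add_eq'.mpr hfix]
  module

section Indicator

variable {N : ℕ} {D : Set (EuclideanSpace ℝ (Fin N))} (hD : MeasurableSet D)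

theorem coeFn_chiMul (f : L2Space N) :
    (chiMul hD f : EuclideanSpace ℝ (Fin N) → ℂ) =ᵐ[volume] D.indicator f :=
  MemLp.coeFn_toLp _

def chiMulₗ : L2Space N →ₗ[ℂ] L2Space N where
  toFun := chiMul hD
  map_add' f g := by
    apply Lp.ext
    filter_upwards [coeFn_chiMul hD (f + g), coeFn_chiMul hD f, coeFn_chiMul hD g,
      Lp.coeFn_add (chiMul hD f) (chiMul hD g), (Lp.coeFn_add f g).indicator (s := D)]
      with x hfg hf hg hadd hind
    rw [hfg, hind, hadd, Pi.add_apply, hf, hg, Set.indicator_add', Pi.add_apply]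
  map_smul' c f := by
    apply Lp.ext
    filter_upwards [coeFn_chiMul hD (c • f), coeFn_chiMul hD f,
      Lp.coeFn_smul c (chiMul hD f), (Lp.coeFn_smul c f).indicator (s := D)]
      with x hcf hf hsmul hind
    rw [hcf, hind, RingHom.id_apply, hsmul, Pi.smul_apply, hf]
    exact Set.indicator_const_smul_apply D c _ x

theorem isIdempotentElem_chiMulₗ : IsIdempotentElem (chiMulₗ hD) := by
  refine LinearMap.ext fun f => Lp.ext ?_
  filter_upwards [coeFn_chiMul hD (chiMul hD f), coeFn_chiMul hD f,
    (coeFn_chiMul hD f).indicator (s := D)] with x hff hf hind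
  change chiMul hD (chiMul hD f) x = chiMul hD f x
  exact hff.trans (hind.trans (by rw [Set.indicator_indicator, Set.inter_self, ← hf]))

theorem isSymmetric_chiMulₗ : (chiMulₗ hD).IsSymmetric := fun f g => by
  rw [L2.inner_def, L2.inner_def]
  refine integral_congr_ae ?_
  filter_upwards [coeFn_chiMul hD f, coeFn_chiMul hD g] with x hf hg
  simp only [chiMulₗ, LinearMap.coe_mk, AddHom.coe_mk, hf, hg]
  by_cases hx : x ∈ D <;> simp [hx]

end Indicator

theorem regularized_fixedPoint_minimizes_tikhonov_general (N : ℕ)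
    (S : Set (EuclideanSpace ℝ (Fin N)))
    (K : Submodule ℂ (L2Space N))
    (hKset : (K : Set (L2Space N)) = {f : L2Space N | IsBandlimited S f})
    (hK : IsClosed (K : Set (L2Space N)))
    (h : L2Space N)
    (M : ℕ) (D : Fin M → Set (EuclideanSpace ℝ (Fin N))) (hD : ∀ m, MeasurableSet (D m))
    (ω : Fin M → ℝ) (hω : ∀ m, ω m ∈ Set.Ioc (0 : ℝ) 1) (hωsum : ∑ m, ω m = 1)
    (μ τ : ℝ) (hμ : 0 < μ) (hτ0 : 0 < τ)
    (fstar : L2Space N) (hfstar : IsBandlimited S fstar)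
    (hfix : TmultiReg K hK hD ω μ τ h fstar = fstar) :
    (∀ f : L2Space N, IsBandlimited S f →
        (∑ m, ω m * ‖chiMul (hD m) fstar - h‖ ^ 2) + μ * ‖fstar‖ ^ 2 ≤
          (∑ m, ω m * ‖chiMul (hD m) f - h‖ ^ 2) + μ * ‖f‖ ^ 2) ∧
      ∀ f : L2Space N, IsBandlimited S f → f ≠ fstar →
        (∑ m, ω m * ‖chiMul (hD m) fstar - h‖ ^ 2) + μ * ‖fstar‖ ^ 2 <
          (∑ m, ω m * ‖chiMul (hD m) f - h‖ ^ 2) + μ * ‖f‖ ^ 2 := by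
  have hmem : ∀ f, IsBandlimited S f → f ∈ K := fun f hf => by
    rw [← SetLike.mem_coe, hKset]; exact hf
  have : CompleteSpace K := hK.completeSpace_coe
  set A : Fin M → L2Space N →ₗ[ℂ] L2Space N := fun m => chiMulₗ (hD m)
  -- Up to unfolding `TmultiReg` and `projOf`, `hfix` is the hypothesis `hfix` of this lemma.
  have hP : K.starProjection (∑ m, ω m • A m (h - fstar)) = μ • fstar :=
    map_sum_smul_eq_smul_of_fixed
      ((K.starProjection : L2Space N →ₗ[ℂ] L2Space N).restrictScalars ℝ)
      (K.starProjection_eq_self_iff.mpr (hmem _ hfstar)) hωsum hτ0.ne' _ hfix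
  have hlt : ∀ f, IsBandlimited S f → f ≠ fstar →
      tikhonov A ω μ h fstar < tikhonov A ω μ h f :=
    fun f hf hne => tikhonov_lt_of_critical (fun m => (hω m).1.le) hμ (hmem _ hfstar)
      (fun g hg => tikhonov_critical_of_starProjection_eq (fun m => isSymmetric_chiMulₗ (hD m))
        (fun m => isIdempotentElem_chiMulₗ (hD m)) K hP hg) (hmem _ hf) hne
  refine ⟨fun f hf => ?_, hlt⟩
  rcases eq_or_ne f fstar with rfl | hne
  · exact le_rfl
  · exact (hlt f hf hne).le

/-- With the hypotheses of the regularized iteration, any fixed point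
`f̂* ∈ B_S` of `T̂_h f = ∑ m, ω_m P_S((1 − μτ) f + τ χ_{D_m}(h − f))` is the unique minimizer
over `f ∈ B_S` of the Tikhonov functional
`γ(f) = ∑ m, ω_m ‖χ_{D_m} f − h‖² + μ ‖f‖²`. -/
theorem regularized_fixedPoint_minimizes_tikhonov (N : ℕ) (hN : 1 ≤ N)
    (S : Set (EuclideanSpace ℝ (Fin N))) (hS : IsCompact S)
    (K : Submodule ℂ (L2Space N))
    (hKset : (K : Set (L2Space N)) = {f : L2Space N | IsBandlimited S f})
    (hK : IsClosed (K : Set (L2Space N)))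
    (h : L2Space N) (hh : IsBandlimited S h)
    (M : ℕ) (D : Fin M → Set (EuclideanSpace ℝ (Fin N))) (hD : ∀ m, MeasurableSet (D m))
    (ω : Fin M → ℝ) (hω : ∀ m, ω m ∈ Set.Ioc (0 : ℝ) 1) (hωsum : ∑ m, ω m = 1)
    (μ τ : ℝ) (hμ : 0 < μ) (hτ0 : 0 < τ) (hτ : τ < 2 / (1 + 2 * μ))
    (fstar : L2Space N) (hfstar : IsBandlimited S fstar)
    (hfix : TmultiReg K hK hD ω μ τ h fstar = fstar) :
    (∀ f : L2Space N, IsBandlimited S f →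
        (∑ m, ω m * ‖chiMul (hD m) fstar - h‖ ^ 2) + μ * ‖fstar‖ ^ 2 ≤
          (∑ m, ω m * ‖chiMul (hD m) f - h‖ ^ 2) + μ * ‖f‖ ^ 2) ∧
      ∀ f : L2Space N, IsBandlimited S f → f ≠ fstar →
        (∑ m, ω m * ‖chiMul (hD m) fstar - h‖ ^ 2) + μ * ‖fstar‖ ^ 2 <
          (∑ m, ω m * ‖chiMul (hD m) f - h‖ ^ 2) + μ * ‖f‖ ^ 2 :=
  regularized_fixedPoint_minimizes_tikhonov_general N S K hKset hK h M D hD ω hω hωsum μ τ hμ hτ0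
    fstar hfstar hfix
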